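/- Assume supp(ν) ⊂ U_ν. Let K be a compact subset of ℝ \ (closure(U_ν) ∪ Θ). Then for all N large enough K ⊂ ℝ \ U_N and Ψ_N = H_N on K, and Ψ_N converges uniformly to Ψ_ν = H_ν on K, i.e. sup_{x ∈ K} |Ψ_N(x) − Ψ_ν(x)| → 0 as N → ∞. -/

import Mathlib

open MeasureTheory Filter Topology Set
open scoped ENNReal

/-- `v_μ(u) = inf {v ≥ 0 : ∫ dμ(x)/((u−x)² + v²) ≤ 1}`. -/
noncomputable def vF (μ : Measure ℝ) (u : ℝ) : ℝ :=
  sInf {v : ℝ | 0 ≤ v ∧ ∫ x, ((u - x) ^ 2 + v ^ 2)⁻¹ ∂μ ≤ 1}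

/-- `U_μ = {t : v_μ(t) > 0}`. -/
def USet (μ : Measure ℝ) : Set ℝ := {t | 0 < vF μ t}

/-- `H_μ(z) = z + ∫ dμ(x)/(z−x)`. -/
noncomputable def HF (μ : Measure ℝ) (z : ℝ) : ℝ := z + ∫ x, (z - x)⁻¹ ∂μ

/-- `Ψ_μ(t) = t + ∫ (t−x) dμ(x)/((t−x)² + v_μ(t)²)`. -/
noncomputable def PsiF (μ : Measure ℝ) (t : ℝ) : ℝ :=
  t + ∫ x, (t - x) / ((t - x) ^ 2 + vF μ t ^ 2) ∂μ

/-- The (topological) support of a measure on ℝ. -/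
def MeasSupp (μ : Measure ℝ) : Set ℝ := {x | ∀ U ∈ nhds x, μ U ≠ 0}

/-- `ν̂_N = (1/(N−r)) Σ_{j=1}^{N−r} δ_{β_j(N)}`. -/
noncomputable def hatNu (r : ℕ) (β : ℕ → ℕ → ℝ) (N : ℕ) : Measure ℝ :=
  ((N - r : ℕ) : ℝ≥0∞)⁻¹ • ∑ i ∈ Finset.range (N - r), Measure.dirac (β N i)

/-!
Let `d > 0` be the distance from `K` to `closure U_ν ∪ Θ`. Then `ν` lives at distance `≥ d` from
`K`, and for large `N` so does `μ_N` up to `d / 2`: its atoms are the spikes and points close to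
`supp ν`. Away from the mass the kernels `1/t` and `1/t²` are bounded and Lipschitz, so weak
convergence gives pointwise, and the uniform Lipschitz bound uniform, convergence on `K` of
`∫ dμ_N(y)/(x - y)` and of `g_N(x) = ∫ dμ_N(y)/(x - y)²`.

Away from the mass, `v_μ(x) = 0` iff `g_μ(x) ≤ 1`. Each `x ∈ K` has a neighbourhood outside `U_ν`,
so `g_ν ≤ 1` there, and strict convexity of `g_ν` gives `g_ν(x) < 1`. By compactness and uniform
convergence `g_N ≤ 1` on `K` for large `N`, i.e. `K ∩ U_N = ∅`; and where `v = 0`, `Ψ = H`.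
-/

open scoped NNReal BoundedContinuousFunction

lemma integral_pos_of_ae_pos {α : Type*} [MeasurableSpace α] {μ : Measure α} [NeZero μ]
    {f : α → ℝ} (hf : Integrable f μ) (hpos : ∀ᵐ a ∂μ, 0 < f a) : 0 < ∫ a, f a ∂μ := by
  have hsupp : Function.support f ∈ ae μ := hpos.mono fun _ ha => ha.ne'
  rw [integral_pos_iff_support_of_nonneg_ae (hpos.mono fun _ ha => ha.le) hf,
    measure_congr (ae_eq_univ.2 (mem_ae_iff.1 hsupp))]
  exact Measure.measure_univ_pos.2 (NeZero.ne μ)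

lemma ae_smul_sum_dirac_add_sum_dirac {α ι κ : Type*} [MeasurableSpace α] {p : α → Prop}
    (hp : MeasurableSet {y | p y}) (c : ℝ≥0∞) (s : Finset ι) (a : ι → ℝ≥0∞) (z : ι → α)
    (t : Finset κ) (w : κ → α) (hz : ∀ i ∈ s, p (z i)) (hw : ∀ j ∈ t, p (w j)) :
    ∀ᵐ y ∂(c • ((∑ i ∈ s, a i • Measure.dirac (z i)) + ∑ j ∈ t, Measure.dirac (w j))), p y :=
  Measure.ae_smul_measure (ae_add_measure_iff.2
    ⟨ae_finsetSum_measure_iff.2 fun i hi =>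
        Measure.ae_smul_measure ((ae_dirac_iff hp).2 (hz i hi)) _,
      ae_finsetSum_measure_iff.2 fun j hj => (ae_dirac_iff hp).2 (hw j hj)⟩) _

lemma tendstoUniformlyOn_of_lipschitzOnWith {X Y ι : Type*} [PseudoMetricSpace X]
    [PseudoMetricSpace Y] {l : Filter ι} {F : ι → X → Y} {f : X → Y} {K : Set X} {L : ℝ≥0}
    (hK : IsCompact K) (hF : ∀ᶠ i in l, LipschitzOnWith L (F i) K) (hf : LipschitzOnWith L f K)
    (hpt : ∀ x ∈ K, Tendsto (fun i => F i x) l (𝓝 (f x))) : TendstoUniformlyOn F f l K := by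
  refine Metric.tendstoUniformlyOn_iff.2 fun ε hε => ?_
  obtain ⟨δ, hδ, hLδ⟩ : ∃ δ > 0, L * δ ≤ ε / 3 := by
    refine ⟨ε / (3 * (L + 1)), by positivity, ?_⟩
    calc (L : ℝ) * (ε / (3 * (L + 1))) ≤ (L + 1) * (ε / (3 * (L + 1))) := by gcongr; linarith
      _ = ε / 3 := by field_simp
  obtain ⟨t, htK, htfin, hcover⟩ := hK.finite_cover_balls hδ
  have hnet : ∀ᶠ i in l, ∀ z ∈ t, dist (f z) (F i z) < ε / 3 :=
    htfin.eventually_all.2 fun z hz => (Metric.tendsto_nhds.1 (hpt z (htK hz)) (ε / 3)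
      (by positivity)).mono fun i hi => by rwa [dist_comm]
  filter_upwards [hF, hnet] with i hFi hneti x hx
  obtain ⟨z, hz, hxball⟩ := mem_iUnion₂.1 (hcover hx)
  have hxz : dist x z ≤ δ := (Metric.mem_ball.1 hxball).le
  have hfxz : dist (f x) (f z) ≤ L * δ :=
    (hf.dist_le_mul x hx z (htK hz)).trans (by gcongr)
  have hFxz : dist (F i z) (F i x) ≤ L * δ :=
    (hFi.dist_le_mul z (htK hz) x hx).trans (by rw [dist_comm]; gcongr)
  calc dist (f x) (F i x) ≤ dist (f x) (f z) + dist (f z) (F i z) + dist (F i z) (F i x) :=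
        dist_triangle4 _ _ _ _
    _ < ε := by linarith [hneti z hz]

lemma exists_boundedContinuousFunction_eqOn {X : Type*} [TopologicalSpace X] [NormalSpace X]
    {S : Set X} (hS : IsClosed S) {φ : X → ℝ} (hφ : ContinuousOn φ S) {C : ℝ}
    (hC : ∀ t ∈ S, |φ t| ≤ C) : ∃ ψ : X →ᵇ ℝ, EqOn φ ψ S := by
  obtain ⟨ψ, -, hψ⟩ := BoundedContinuousFunction.exists_norm_eq_domRestrict_eq_of_closed
    (BoundedContinuousFunction.ofNormedAddCommGroup (S.domRestrict φ) hφ.domRestrict C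
      fun t => hC t t.2) hS
  exact ⟨ψ, fun t ht => (DFunLike.congr_fun hψ ⟨t, ht⟩).symm⟩

lemma exists_pos_le_abs_sub_of_disjoint {K C : Set ℝ} (hK : IsCompact K) (hC : IsClosed C)
    (hKC : Disjoint K C) : ∃ d > 0, ∀ x ∈ K, ∀ z ∈ C, d ≤ |x - z| := by
  obtain ⟨r, hr, h⟩ := Metric.exists_pos_forall_lt_edist hK hC hKC
  refine ⟨r, hr, fun x hx z hz => ?_⟩
  have hrz := h x hx z hz
  rw [edist_nndist, ENNReal.coe_lt_coe, ← NNReal.coe_lt_coe, coe_nndist, Real.dist_eq] at hrz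
  exact hrz.le

lemma sub_le_abs_sub_of_infDist_lt {S : Set ℝ} (hS : S.Nonempty) {x y d ε : ℝ}
    (hx : ∀ z ∈ S, d ≤ |x - z|) (hy : Metric.infDist y S < ε) : d - ε ≤ |x - y| := by
  obtain ⟨z, hz, hyz⟩ := (Metric.infDist_lt_iff hS).1 hy
  rw [Real.dist_eq] at hyz
  linarith [hx z hz, abs_sub_le x y z]

section Kernels

variable {ρ : ℝ}

lemma abs_inv_le_of_le_abs (hρ : 0 < ρ) {t : ℝ} (ht : ρ ≤ |t|) : |t⁻¹| ≤ ρ⁻¹ := by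
  rw [abs_inv]
  exact inv_anti₀ hρ ht

lemma abs_inv_sq_add_sq_le_of_le_abs (hρ : 0 < ρ) {t v : ℝ} (ht : ρ ≤ |t|) :
    |(t ^ 2 + v ^ 2)⁻¹| ≤ (ρ ^ 2)⁻¹ := by
  have : ρ ^ 2 ≤ t ^ 2 := by rw [← sq_abs t]; gcongr
  rw [abs_of_nonneg (by positivity)]
  exact inv_anti₀ (by positivity) (by nlinarith)

lemma abs_inv_sub_inv_le (hρ : 0 < ρ) {a b : ℝ} (ha : ρ ≤ |a|) (hb : ρ ≤ |b|) :
    |a⁻¹ - b⁻¹| ≤ (ρ ^ 2)⁻¹ * |a - b| := by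
  have ha0 : 0 < |a| := hρ.trans_le ha
  have hb0 : 0 < |b| := hρ.trans_le hb
  rw [inv_sub_inv (abs_pos.1 ha0) (abs_pos.1 hb0), abs_div, abs_mul, abs_sub_comm, inv_mul_eq_div]
  gcongr
  nlinarith

lemma abs_inv_sq_sub_inv_sq_le (hρ : 0 < ρ) {a b : ℝ} (ha : ρ ≤ |a|) (hb : ρ ≤ |b|) :
    |(a ^ 2)⁻¹ - (b ^ 2)⁻¹| ≤ 2 / ρ ^ 3 * |a - b| :=
  calc |(a ^ 2)⁻¹ - (b ^ 2)⁻¹| = |a⁻¹ + b⁻¹| * |a⁻¹ - b⁻¹| := by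
        rw [← abs_mul, ← sq_sub_sq, inv_pow, inv_pow]
    _ ≤ (ρ⁻¹ + ρ⁻¹) * ((ρ ^ 2)⁻¹ * |a - b|) := by
        gcongr
        exacts [(abs_add_le _ _).trans (add_le_add (abs_inv_le_of_le_abs hρ ha)
          (abs_inv_le_of_le_abs hρ hb)), abs_inv_sub_inv_le hρ ha hb]
    _ = 2 / ρ ^ 3 * |a - b| := by field_simp; ring

lemma lipschitzOnWith_inv_setOf_le_abs (hρ : 0 < ρ) :
    LipschitzOnWith (ρ ^ 2)⁻¹.toNNReal (fun t : ℝ => t⁻¹) {t | ρ ≤ |t|} :=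
  LipschitzOnWith.of_dist_le_mul fun a ha b hb => by
    rw [Real.coe_toNNReal _ (by positivity), Real.dist_eq, Real.dist_eq]
    exact abs_inv_sub_inv_le hρ ha hb

lemma lipschitzOnWith_inv_sq_setOf_le_abs (hρ : 0 < ρ) :
    LipschitzOnWith (2 / ρ ^ 3).toNNReal (fun t : ℝ => (t ^ 2)⁻¹) {t | ρ ≤ |t|} :=
  LipschitzOnWith.of_dist_le_mul fun a ha b hb => by
    rw [Real.coe_toNNReal _ (by positivity), Real.dist_eq, Real.dist_eq]
    exact abs_inv_sq_sub_inv_sq_le hρ ha hb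

lemma two_mul_inv_sq_lt_add {a h : ℝ} (hh : 0 < h) (hha : h < |a|) :
    2 * (a ^ 2)⁻¹ < ((a - h) ^ 2)⁻¹ + ((a + h) ^ 2)⁻¹ := by
  have hsq : h ^ 2 < a ^ 2 := by nlinarith [sq_abs a, abs_nonneg a]
  have hprod : (a - h) * (a + h) ≠ 0 := by nlinarith
  have ha : a ≠ 0 := by rintro rfl; simp at hha; linarith
  have hsub := left_ne_zero_of_mul hprod
  have hadd := right_ne_zero_of_mul hprod
  have key : ((a - h) ^ 2)⁻¹ + ((a + h) ^ 2)⁻¹ - 2 * (a ^ 2)⁻¹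
      = 2 * h ^ 2 * (3 * a ^ 2 - h ^ 2) / (a ^ 2 * ((a - h) * (a + h)) ^ 2) := by
    field_simp
    ring
  have : 0 < 2 * h ^ 2 * (3 * a ^ 2 - h ^ 2) / (a ^ 2 * ((a - h) * (a + h)) ^ 2) := by
    have : 0 < 3 * a ^ 2 - h ^ 2 := by nlinarith
    positivity
  linarith

end Kernels

lemma measSupp_eq_support (μ : Measure ℝ) : MeasSupp μ = μ.support := by
  ext x
  simp [MeasSupp, Measure.mem_support_iff_forall, pos_iff_ne_zero]

def AESeparated (μ : Measure ℝ) (K : Set ℝ) (ρ : ℝ) : Prop :=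
  ∀ᵐ y ∂μ, ∀ x ∈ K, ρ ≤ |x - y|

namespace AESeparated

variable {μ : Measure ℝ} {K : Set ℝ} {ρ : ℝ}

lemma ae_le_abs_sub (h : AESeparated μ K ρ) {x : ℝ} (hx : x ∈ K) : ∀ᵐ y ∂μ, ρ ≤ |x - y| :=
  Eventually.mono h fun _ hy => hy x hx

lemma of_le (h : AESeparated μ K ρ) {ρ' : ℝ} (hρ : ρ' ≤ ρ) : AESeparated μ K ρ' :=
  Eventually.mono h fun _ hy x hx => hρ.trans (hy x hx)

lemma of_measSupp (h : ∀ x ∈ K, ∀ z ∈ MeasSupp μ, ρ ≤ |x - z|) : AESeparated μ K ρ := by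
  rw [measSupp_eq_support] at h
  exact mem_of_superset Measure.support_mem_ae fun y hy x hx => h x hx y hy

end AESeparated

lemma measurableSet_setOf_forall_le_abs_sub (K : Set ℝ) (ρ : ℝ) :
    MeasurableSet {y : ℝ | ∀ x ∈ K, ρ ≤ |x - y|} := by
  have hK : {y : ℝ | ∀ x ∈ K, ρ ≤ |x - y|} = ⋂ x ∈ K, {y | ρ ≤ |x - y|} := by ext; simp
  rw [hK]
  exact (isClosed_biInter fun x _ => isClosed_le continuous_const (by fun_prop)).measurableSet

section KernelIntegrals

variable {φ : ℝ → ℝ} {ρ C x : ℝ}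

lemma integrable_comp_sub_of_ae_le_abs_sub {μ : Measure ℝ} [IsFiniteMeasure μ]
    (hφm : Measurable φ) (hφb : ∀ t, ρ ≤ |t| → |φ t| ≤ C) (hsep : ∀ᵐ y ∂μ, ρ ≤ |x - y|) :
    Integrable (fun y => φ (x - y)) μ :=
  (integrable_const C).mono' (hφm.comp (measurable_const.sub measurable_id)).aestronglyMeasurable
    (hsep.mono fun _ hy => hφb _ hy)

lemma AESeparated.lipschitzOnWith_integral {μ : Measure ℝ} [IsProbabilityMeasure μ] {K : Set ℝ}
    {L : ℝ≥0} (hsep : AESeparated μ K ρ) (hφm : Measurable φ)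
    (hφ : LipschitzOnWith L φ {t | ρ ≤ |t|}) (hφb : ∀ t, ρ ≤ |t| → |φ t| ≤ C) :
    LipschitzOnWith L (fun x => ∫ y, φ (x - y) ∂μ) K := by
  refine LipschitzOnWith.of_dist_le_mul fun x hx x' hx' => ?_
  have hbound : ∀ᵐ y ∂μ, ‖φ (x - y) - φ (x' - y)‖ ≤ L * dist x x' :=
    Eventually.mono hsep fun y hy => by
      simpa only [← dist_eq_norm, dist_sub_right] using hφ.dist_le_mul _ (hy x hx) _ (hy x' hx')
  rw [dist_eq_norm, ← integral_sub
    (integrable_comp_sub_of_ae_le_abs_sub hφm hφb (hsep.ae_le_abs_sub hx))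
    (integrable_comp_sub_of_ae_le_abs_sub hφm hφb (hsep.ae_le_abs_sub hx'))]
  simpa using norm_integral_le_of_norm_le_const hbound

lemma tendsto_integral_comp_sub {ι : Type*} {l : Filter ι} {μ : ι → Measure ℝ} {ν : Measure ℝ}
    (hweak : ∀ f : ℝ →ᵇ ℝ, Tendsto (fun i => ∫ y, f y ∂μ i) l (𝓝 (∫ y, f y ∂ν)))
    (hφ : ContinuousOn φ {t | ρ ≤ |t|}) (hφb : ∀ t, ρ ≤ |t| → |φ t| ≤ C)
    (hsepμ : ∀ᶠ i in l, ∀ᵐ y ∂μ i, ρ ≤ |x - y|) (hsepν : ∀ᵐ y ∂ν, ρ ≤ |x - y|) :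
    Tendsto (fun i => ∫ y, φ (x - y) ∂μ i) l (𝓝 (∫ y, φ (x - y) ∂ν)) := by
  obtain ⟨ψ, hψ⟩ := exists_boundedContinuousFunction_eqOn
    (isClosed_le continuous_const continuous_abs) hφ hφb
  have hψx (m : Measure ℝ) (hm : ∀ᵐ y ∂m, ρ ≤ |x - y|) :
      ∫ y, φ (x - y) ∂m = ∫ y, ψ.compContinuous ⟨(x - ·), by fun_prop⟩ y ∂m :=
    integral_congr_ae (hm.mono fun _ hy => hψ hy)
  rw [hψx ν hsepν]
  exact (hweak _).congr' (hsepμ.mono fun i hi => (hψx (μ i) hi).symm)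

lemma tendstoUniformlyOn_integral_comp_sub {ι : Type*} {l : Filter ι} {μ : ι → Measure ℝ}
    [∀ i, IsProbabilityMeasure (μ i)] {ν : Measure ℝ} [IsProbabilityMeasure ν] {K : Set ℝ}
    {L : ℝ≥0} (hweak : ∀ f : ℝ →ᵇ ℝ, Tendsto (fun i => ∫ y, f y ∂μ i) l (𝓝 (∫ y, f y ∂ν)))
    (hK : IsCompact K) (hφm : Measurable φ) (hφ : LipschitzOnWith L φ {t | ρ ≤ |t|})
    (hφb : ∀ t, ρ ≤ |t| → |φ t| ≤ C) (hsepμ : ∀ᶠ i in l, AESeparated (μ i) K ρ)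
    (hsepν : AESeparated ν K ρ) :
    TendstoUniformlyOn (fun i x => ∫ y, φ (x - y) ∂μ i) (fun x => ∫ y, φ (x - y) ∂ν) l K :=
  tendstoUniformlyOn_of_lipschitzOnWith hK
    (hsepμ.mono fun _ h => h.lipschitzOnWith_integral hφm hφ hφb)
    (hsepν.lipschitzOnWith_integral hφm hφ hφb) fun _ hx =>
      tendsto_integral_comp_sub hweak hφ.continuousOn hφb
        (hsepμ.mono fun _ h => h.ae_le_abs_sub hx) (hsepν.ae_le_abs_sub hx)

lemma integrable_inv_sq_add_sq {μ : Measure ℝ} [IsFiniteMeasure μ] (hρ : 0 < ρ)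
    (hsep : ∀ᵐ y ∂μ, ρ ≤ |x - y|) (v : ℝ) :
    Integrable (fun y => ((x - y) ^ 2 + v ^ 2)⁻¹) μ :=
  integrable_comp_sub_of_ae_le_abs_sub (φ := fun t => (t ^ 2 + v ^ 2)⁻¹) (by fun_prop)
    (fun _ ht => abs_inv_sq_add_sq_le_of_le_abs hρ ht) hsep

lemma integrable_inv_sq {μ : Measure ℝ} [IsFiniteMeasure μ] (hρ : 0 < ρ)
    (hsep : ∀ᵐ y ∂μ, ρ ≤ |x - y|) :
    Integrable (fun y => ((x - y) ^ 2)⁻¹) μ := by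
  simpa using integrable_inv_sq_add_sq hρ hsep 0

end KernelIntegrals

section VF

lemma vF_nonneg (μ : Measure ℝ) (u : ℝ) : 0 ≤ vF μ u :=
  Real.sInf_nonneg fun _ hv => hv.1

variable {μ : Measure ℝ} {x : ℝ}

lemma notMem_uSet_iff : x ∉ USet μ ↔ vF μ x = 0 :=
  not_lt.trans (vF_nonneg μ x).ge_iff_eq'

lemma psiF_eq_hF_of_vF_eq_zero (h : vF μ x = 0) : PsiF μ x = HF μ x := by
  have hker (y : ℝ) : (x - y) / ((x - y) ^ 2 + vF μ x ^ 2) = (x - y)⁻¹ := by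
    rw [h, zero_pow two_ne_zero, add_zero, sq, div_self_mul_self']
  simp only [PsiF, HF, hker]

lemma vF_eq_zero_of_forall_pos (h : ∀ v : ℝ, 0 < v → ∫ y, ((x - y) ^ 2 + v ^ 2)⁻¹ ∂μ ≤ 1) :
    vF μ x = 0 := by
  refine le_antisymm (le_of_forall_pos_le_add fun v hv => ?_) (vF_nonneg μ x)
  rw [zero_add]
  exact csInf_le ⟨0, fun _ hw => hw.1⟩ ⟨hv.le, h v hv⟩

end VF

section InverseSquareIntegral

variable {μ : Measure ℝ} [IsProbabilityMeasure μ] {ρ x : ℝ}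

lemma integral_inv_sq_add_sq_le_one_of_vF_eq_zero (hρ : 0 < ρ)
    (hsep : ∀ᵐ y ∂μ, ρ ≤ |x - y|) (hv0 : vF μ x = 0) {v : ℝ} (hv : 0 < v) :
    ∫ y, ((x - y) ^ 2 + v ^ 2)⁻¹ ∂μ ≤ 1 := by
  -- `sInf ∅ = 0`, so `vF μ x = 0` alone does not provide admissible `w < v`
  have hne : {w : ℝ | 0 ≤ w ∧ ∫ y, ((x - y) ^ 2 + w ^ 2)⁻¹ ∂μ ≤ 1}.Nonempty := by
    refine ⟨1, zero_le_one, ?_⟩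
    calc ∫ y, ((x - y) ^ 2 + 1 ^ 2)⁻¹ ∂μ ≤ ∫ _, (1 : ℝ) ∂μ :=
          integral_mono (integrable_inv_sq_add_sq hρ hsep 1) (integrable_const 1)
            fun y => inv_le_one_of_one_le₀ (by nlinarith [sq_nonneg (x - y)])
      _ = 1 := by simp
  obtain ⟨w, ⟨hw0, hw⟩, hwv⟩ := exists_lt_of_csInf_lt hne (hv0.trans_lt hv : vF μ x < v)
  refine le_trans (integral_mono_ae (integrable_inv_sq_add_sq hρ hsep v)
    (integrable_inv_sq_add_sq hρ hsep w) (hsep.mono fun y hy => ?_)) hw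
  have : ρ ^ 2 ≤ (x - y) ^ 2 := sq_le_sq.2 (by rwa [abs_of_pos hρ])
  exact inv_anti₀ (by nlinarith [sq_nonneg w]) (by gcongr)

lemma vF_eq_zero_iff_integral_inv_sq_le_one (hρ : 0 < ρ) (hsep : ∀ᵐ y ∂μ, ρ ≤ |x - y|) :
    vF μ x = 0 ↔ ∫ y, ((x - y) ^ 2)⁻¹ ∂μ ≤ 1 := by
  have hsq : ∀ᵐ y ∂μ, ρ ^ 2 ≤ (x - y) ^ 2 :=
    hsep.mono fun y hy => sq_le_sq.2 (by rwa [abs_of_pos hρ])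
  constructor
  · intro hv0
    refine le_of_forall_pos_le_add fun ε hε => ?_
    set v := ρ * √ε
    have hv2 : v ^ 2 = ρ ^ 2 * ε := by rw [mul_pow, Real.sq_sqrt hε.le]
    have hI := integral_inv_sq_add_sq_le_one_of_vF_eq_zero hρ hsep hv0 (by positivity : 0 < v)
    -- `v² = ρ² ε ≤ ε (x - y)²`, so `(x - y)² + v² ≤ (1 + ε) (x - y)²`
    calc ∫ y, ((x - y) ^ 2)⁻¹ ∂μ ≤ ∫ y, (1 + ε) * ((x - y) ^ 2 + v ^ 2)⁻¹ ∂μ := by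
          refine integral_mono_ae (integrable_inv_sq hρ hsep)
            ((integrable_inv_sq_add_sq hρ hsep v).const_mul _) (hsq.mono fun y hy => ?_)
          have h0 : 0 < (x - y) ^ 2 := (pow_pos hρ 2).trans_le hy
          dsimp only
          rw [← div_eq_mul_inv, inv_eq_one_div,
            div_le_div_iff₀ h0 (add_pos_of_pos_of_nonneg h0 (sq_nonneg v)), hv2]
          nlinarith
      _ = (1 + ε) * ∫ y, ((x - y) ^ 2 + v ^ 2)⁻¹ ∂μ := integral_const_mul _ _
      _ ≤ 1 + ε := by nlinarith
  · intro hg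
    refine vF_eq_zero_of_forall_pos fun v hv => le_trans (integral_mono_ae
      (integrable_inv_sq_add_sq hρ hsep v) (integrable_inv_sq hρ hsep) (hsq.mono fun y hy =>
        inv_anti₀ ((pow_pos hρ 2).trans_le hy) (le_add_of_nonneg_right (sq_nonneg v)))) hg

lemma two_mul_integral_inv_sq_lt_add {h : ℝ} (hh : 0 < h) (hsep : ∀ᵐ y ∂μ, 2 * h ≤ |x - y|) :
    2 * ∫ y, ((x - y) ^ 2)⁻¹ ∂μ < ∫ y, ((x - h - y) ^ 2)⁻¹ ∂μ + ∫ y, ((x + h - y) ^ 2)⁻¹ ∂μ := by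
  have hsub : ∀ᵐ y ∂μ, h ≤ |x - h - y| := hsep.mono fun y hy => by
    have := abs_sub_abs_le_abs_sub (x - y) h
    rw [abs_of_pos hh, sub_right_comm] at this
    linarith
  have hadd : ∀ᵐ y ∂μ, h ≤ |x + h - y| := hsep.mono fun y hy => by
    have := abs_sub_abs_le_abs_sub (x - y) (-h)
    rw [abs_neg, abs_of_pos hh, sub_neg_eq_add, sub_add_eq_add_sub] at this
    linarith
  have hint := integrable_inv_sq hh hsub
  have hint' := integrable_inv_sq hh hadd
  have hint₂ := (integrable_inv_sq (by positivity) hsep).const_mul 2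
  have hsum : Integrable (fun y => ((x - h - y) ^ 2)⁻¹ + ((x + h - y) ^ 2)⁻¹) μ := hint.add hint'
  have hpos := integral_pos_of_ae_pos (f := fun y =>
    ((x - h - y) ^ 2)⁻¹ + ((x + h - y) ^ 2)⁻¹ - 2 * ((x - y) ^ 2)⁻¹) (hsum.sub hint₂)
    (hsep.mono fun y hy => by
      have := two_mul_inv_sq_lt_add hh (a := x - y) (by linarith)
      rw [sub_right_comm, sub_add_eq_add_sub] at this
      exact sub_pos.2 this)
  rw [integral_sub hsum hint₂, integral_add hint hint', integral_const_mul] at hpos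
  linarith

/-- Strict convexity of `x ↦ ∫ dμ(y)/(x - y)²` turns `≤ 1` near `x` into `< 1` at `x`. -/
lemma integral_inv_sq_lt_one_of_notMem_closure {d : ℝ} (hd : 0 < d)
    (hsep : ∀ᵐ y ∂μ, d ≤ |x - y|) (hx : x ∉ closure (USet μ)) :
    ∫ y, ((x - y) ^ 2)⁻¹ ∂μ < 1 := by
  obtain ⟨ε, hε, hball⟩ := Metric.isOpen_iff.1 isClosed_closure.isOpen_compl x hx
  set h := min (ε / 2) (d / 2)
  have hh : 0 < h := by positivity
  have hhε : h ≤ ε / 2 := min_le_left _ _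
  have hhd : h ≤ d / 2 := min_le_right _ _
  have hle_one {z : ℝ} (hz : |z - x| ≤ h) : ∫ y, ((z - y) ^ 2)⁻¹ ∂μ ≤ 1 := by
    have hsepz : ∀ᵐ y ∂μ, d / 2 ≤ |z - y| := hsep.mono fun y hy => by
      linarith [abs_sub_le x z y, abs_sub_comm x z]
    refine (vF_eq_zero_iff_integral_inv_sq_le_one (half_pos hd) hsepz).1
      (notMem_uSet_iff.1 fun hU => hball ?_ (subset_closure hU))
    rw [Metric.mem_ball, Real.dist_eq]
    linarith
  have := two_mul_integral_inv_sq_lt_add hh (hsep.mono fun y hy => by linarith)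
  linarith [hle_one (z := x - h) (by simp [abs_of_pos hh]),
    hle_one (z := x + h) (by simp [abs_of_pos hh])]

end InverseSquareIntegral

section Limit

variable {ι : Type*} {l : Filter ι} {μ : ι → Measure ℝ} [∀ i, IsProbabilityMeasure (μ i)]
  {ν : Measure ℝ} [IsProbabilityMeasure ν] {K : Set ℝ}

lemma tendstoUniformlyOn_hF {ρ : ℝ} (hρ : 0 < ρ)
    (hweak : ∀ f : ℝ →ᵇ ℝ, Tendsto (fun i => ∫ y, f y ∂μ i) l (𝓝 (∫ y, f y ∂ν)))
    (hK : IsCompact K) (hsepμ : ∀ᶠ i in l, AESeparated (μ i) K ρ) (hsepν : AESeparated ν K ρ) :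
    TendstoUniformlyOn (fun i => HF (μ i)) (HF ν) l K := by
  refine Metric.tendstoUniformlyOn_iff.2 fun ε hε =>
    (Metric.tendstoUniformlyOn_iff.1 (tendstoUniformlyOn_integral_comp_sub hweak hK
      measurable_inv (lipschitzOnWith_inv_setOf_le_abs hρ) (fun _ ht => abs_inv_le_of_le_abs hρ ht)
      hsepμ hsepν) ε hε).mono fun i hi x hx => ?_
  simpa only [HF, dist_add_left] using hi x hx

lemma eventually_forall_vF_eq_zero {d : ℝ} (hd : 0 < d)
    (hweak : ∀ f : ℝ →ᵇ ℝ, Tendsto (fun i => ∫ y, f y ∂μ i) l (𝓝 (∫ y, f y ∂ν)))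
    (hK : IsCompact K) (hKU : ∀ x ∈ K, x ∉ closure (USet ν))
    (hsepμ : ∀ᶠ i in l, AESeparated (μ i) K (d / 2)) (hsepν : AESeparated ν K d) :
    ∀ᶠ i in l, ∀ x ∈ K, vF (μ i) x = 0 := by
  have hρ : 0 < d / 2 := half_pos hd
  have hsepν' := hsepν.of_le (half_le_self hd.le)
  have hφm : Measurable fun t : ℝ => (t ^ 2)⁻¹ := by fun_prop
  have hφ := lipschitzOnWith_inv_sq_setOf_le_abs hρ
  have hφb (t : ℝ) (ht : d / 2 ≤ |t|) : |(t ^ 2)⁻¹| ≤ ((d / 2) ^ 2)⁻¹ := by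
    simpa using abs_inv_sq_add_sq_le_of_le_abs (v := 0) hρ ht
  obtain ⟨u, hu1, hgu⟩ : ∃ u < 1, ∀ x ∈ K, ∫ y, ((x - y) ^ 2)⁻¹ ∂ν ≤ u :=
    hK.exists_forall_le' (α := ℝᵒᵈ) (hsepν'.lipschitzOnWith_integral hφm hφ hφb).continuousOn
      fun x hx => integral_inv_sq_lt_one_of_notMem_closure hd (hsepν.ae_le_abs_sub hx) (hKU x hx)
  filter_upwards [hsepμ, (tendstoUniformlyOn_integral_comp_sub hweak hK hφm hφ hφb hsepμ
    hsepν').eventually_forall_lt hu1 hgu] with i hi hgi x hx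
  exact (vF_eq_zero_iff_integral_inv_sq_le_one hρ (hi.ae_le_abs_sub hx)).2 (hgi x hx).le

end Limit

lemma eventually_aeSeparated_of_spikes {ν : Measure ℝ} [IsProbabilityMeasure ν] {J r : ℕ}
    {θ : Fin J → ℝ} {k : Fin J → ℕ} {β : ℕ → ℕ → ℝ} {μA : ℕ → Measure ℝ}
    (hdecomp : ∀ N, r ≤ N → μA N = (N : ℝ≥0∞)⁻¹ •
      ((∑ j, (k j : ℝ≥0∞) • Measure.dirac (θ j)) +
        ∑ i ∈ Finset.range (N - r), Measure.dirac (β N i)))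
    (hβ : ∀ ε > 0, ∀ᶠ N in atTop, ∀ i ∈ Finset.range (N - r),
      Metric.infDist (β N i) (MeasSupp ν) < ε)
    {K : Set ℝ} {d : ℝ} (hd : 0 < d) (hθ : ∀ x ∈ K, ∀ j, d ≤ |x - θ j|)
    (hν : ∀ x ∈ K, ∀ z ∈ MeasSupp ν, d ≤ |x - z|) :
    ∀ᶠ N in atTop, AESeparated (μA N) K (d / 2) := by
  have hsupp : (MeasSupp ν).Nonempty := by
    rw [measSupp_eq_support]
    exact Measure.nonempty_support (IsProbabilityMeasure.ne_zero ν)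
  filter_upwards [hβ (d / 2) (half_pos hd), eventually_ge_atTop r] with N hβN hrN
  rw [AESeparated, hdecomp N hrN]
  refine ae_smul_sum_dirac_add_sum_dirac (measurableSet_setOf_forall_le_abs_sub K _) _ _ _ _ _ _
    (fun j _ x hx => ?_) (fun i hi x hx => ?_)
  · linarith [hθ x hx j]
  · linarith [sub_le_abs_sub_of_infDist_lt hsupp (hν x hx) (hβN i hi)]

theorem stmt19_general
    (ν : Measure ℝ) [IsProbabilityMeasure ν]
    (J r : ℕ) (θ : Fin J → ℝ) (k : Fin J → ℕ)
    (β : ℕ → ℕ → ℝ) (μA : ℕ → Measure ℝ)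
    (hprob : ∀ N, IsProbabilityMeasure (μA N))
    (hdecomp : ∀ N, r ≤ N → μA N = (N : ℝ≥0∞)⁻¹ •
      ((∑ j, (k j : ℝ≥0∞) • Measure.dirac (θ j)) +
        ∑ i ∈ Finset.range (N - r), Measure.dirac (β N i)))
    (hweak : ∀ f : BoundedContinuousFunction ℝ ℝ,
      Tendsto (fun N => ∫ x, f x ∂(μA N)) atTop (𝓝 (∫ x, f x ∂ν)))
    (hβ : ∀ ε > 0, ∀ᶠ N in atTop, ∀ i ∈ Finset.range (N - r),
      Metric.infDist (β N i) (MeasSupp ν) < ε)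
    (hsuppU : MeasSupp ν ⊆ USet ν)
    (K : Set ℝ) (hK : IsCompact K) (hKs : K ⊆ (closure (USet ν) ∪ Set.range θ)ᶜ) :
    (∀ x ∈ K, PsiF ν x = HF ν x) ∧
    (∀ᶠ N in atTop, ∀ x ∈ K, x ∉ USet (μA N) ∧ PsiF (μA N) x = HF (μA N) x) ∧
    TendstoUniformlyOn (fun N x => PsiF (μA N) x) (PsiF ν) atTop K := by
  have := hprob
  obtain ⟨d, hd, hdK⟩ := exists_pos_le_abs_sub_of_disjoint hK
    (isClosed_closure.union (finite_range θ).isClosed) (subset_compl_iff_disjoint_right.1 hKs)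
  have hdν (x : ℝ) (hx : x ∈ K) (z : ℝ) (hz : z ∈ MeasSupp ν) : d ≤ |x - z| :=
    hdK x hx z (Or.inl (subset_closure (hsuppU hz)))
  have hsepν : AESeparated ν K d := .of_measSupp hdν
  have hsepμ := eventually_aeSeparated_of_spikes hdecomp hβ hd
    (fun x hx j => hdK x hx (θ j) (Or.inr ⟨j, rfl⟩)) hdν
  have hKU (x : ℝ) (hx : x ∈ K) : x ∉ closure (USet ν) := fun h => hKs hx (Or.inl h)
  have hvν (x : ℝ) (hx : x ∈ K) : vF ν x = 0 :=
    notMem_uSet_iff.1 fun h => hKU x hx (subset_closure h)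
  have hvμ := eventually_forall_vF_eq_zero hd hweak hK hKU hsepμ hsepν
  refine ⟨fun x hx => psiF_eq_hF_of_vF_eq_zero (hvν x hx), hvμ.mono fun N hN x hx =>
    ⟨notMem_uSet_iff.2 (hN x hx), psiF_eq_hF_of_vF_eq_zero (hN x hx)⟩, ?_⟩
  refine ((tendstoUniformlyOn_hF (half_pos hd) hweak hK hsepμ
    (hsepν.of_le (half_le_self hd.le))).congr ?_).congr_right ?_
  · exact hvμ.mono fun N hN x hx => (psiF_eq_hF_of_vF_eq_zero (hN x hx)).symm
  · exact fun x hx => (psiF_eq_hF_of_vF_eq_zero (hvν x hx)).symm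

/-- on a compact set `K ⊆ ℝ \ (closure(U_ν) ∪ Θ)`, for all large `N`,
`K ⊆ ℝ \ U_N` and `Ψ_N = H_N` on `K`, and `Ψ_N → Ψ_ν = H_ν` uniformly on `K`. -/
theorem stmt19
    (ν : Measure ℝ) [IsProbabilityMeasure ν] (hcomp : IsCompact (MeasSupp ν))
    (J r : ℕ) (θ : Fin J → ℝ) (k : Fin J → ℕ)
    (hθanti : StrictAnti θ) (hθsupp : ∀ j, θ j ∉ MeasSupp ν)
    (hkpos : ∀ j, 0 < k j) (hkr : ∑ j, k j = r)
    (β : ℕ → ℕ → ℝ) (μA : ℕ → Measure ℝ)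
    (hprob : ∀ N, IsProbabilityMeasure (μA N))
    (hdecomp : ∀ N, r ≤ N → μA N = (N : ℝ≥0∞)⁻¹ •
      ((∑ j, (k j : ℝ≥0∞) • Measure.dirac (θ j)) +
        ∑ i ∈ Finset.range (N - r), Measure.dirac (β N i)))
    (hweak : ∀ f : BoundedContinuousFunction ℝ ℝ,
      Tendsto (fun N => ∫ x, f x ∂(μA N)) atTop (𝓝 (∫ x, f x ∂ν)))
    (hβ : ∀ ε > 0, ∀ᶠ N in atTop, ∀ i ∈ Finset.range (N - r),
      Metric.infDist (β N i) (MeasSupp ν) < ε)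
    (hsuppU : MeasSupp ν ⊆ USet ν)
    (K : Set ℝ) (hK : IsCompact K) (hKs : K ⊆ (closure (USet ν) ∪ Set.range θ)ᶜ) :
    (∀ x ∈ K, PsiF ν x = HF ν x) ∧
    (∀ᶠ N in atTop, ∀ x ∈ K, x ∉ USet (μA N) ∧ PsiF (μA N) x = HF (μA N) x) ∧
    TendstoUniformlyOn (fun N x => PsiF (μA N) x) (PsiF ν) atTop K :=
  stmt19_general ν J r θ k β μA hprob hdecomp hweak hβ hsuppU K hK hKs
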